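/- arXiv:1301.0460 — 5 statements merged into one kernel-verified Lean document; each statement's English description precedes it below -/
import Mathlib

section
/- If G is a simple graph without isolated vertices and e is an edge not in G, then the total domination number of G + e is at least the total domination number of G minus two. -/
/-- The total domination number of a graph, as an extended natural number
(`⊤` when no total dominating set exists). -/
noncomputable def gammaT {V : Type*} (G : SimpleGraph V) : ℕ∞ :=
  sInf {n : ℕ∞ | ∃ S : Finset V, (S.card : ℕ∞) = n ∧ ∀ v : V, ∃ u ∈ S, G.Adj v u}

theorem Finset.card_insert_insert_le {α : Type*} [DecidableEq α] (a b : α) (s : Finset α) :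
    (insert a (insert b s)).card ≤ s.card + 2 :=
  (card_insert_le _ _).trans (Nat.add_le_add_right (card_insert_le _ _) 1)

namespace SimpleGraph

variable {V : Type*}

def IsTotalDominatingSet (G : SimpleGraph V) (S : Finset V) : Prop :=
  ∀ v, ∃ u ∈ S, G.Adj v u

theorem gammaT_le_card {G : SimpleGraph V} {S : Finset V} (hS : G.IsTotalDominatingSet S) :
    gammaT G ≤ S.card :=
  sInf_le ⟨S, rfl, hS⟩

theorem gammaT_le_gammaT_add {G H : SimpleGraph V} (k : ℕ)
    (h : ∀ S, H.IsTotalDominatingSet S → ∃ T, G.IsTotalDominatingSet T ∧ T.card ≤ S.card + k) :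
    gammaT G ≤ gammaT H + k := by
  rw [gammaT.eq_def H, ENat.sInf_add]
  refine le_iInf₂ ?_
  rintro _ ⟨S, rfl, hS⟩
  obtain ⟨T, hT, hcard⟩ := h S hS
  exact (gammaT_le_card hT).trans (mod_cast hcard)

/-- Each of `a`, `b` may have been dominated only through the new edge; a `G`-neighbour of each
repairs that. -/
theorem IsTotalDominatingSet.of_sup_edge [DecidableEq V] {G : SimpleGraph V} {S : Finset V}
    {a b a' b' : V} (hS : (G ⊔ fromEdgeSet {s(a, b)}).IsTotalDominatingSet S)
    (ha : G.Adj a a') (hb : G.Adj b b') :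
    G.IsTotalDominatingSet (insert a' (insert b' S)) := by
  intro v
  obtain ⟨u, huS, hvu⟩ := hS v
  simp only [sup_adj, fromEdgeSet_adj, Set.mem_singleton_iff, Sym2.eq_iff] at hvu
  rcases hvu with hvu | ⟨⟨rfl, -⟩ | ⟨rfl, -⟩, -⟩
  · exact ⟨u, by simp [huS], hvu⟩
  · exact ⟨a', by simp, ha⟩
  · exact ⟨b', by simp, hb⟩

end SimpleGraph

theorem stmt2_general {V : Type*} (G : SimpleGraph V)
    (hiso : ∀ v : V, ∃ u : V, G.Adj v u)
    (a b : V) :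
    gammaT G ≤ gammaT (G ⊔ SimpleGraph.fromEdgeSet {s(a, b)}) + 2 := by
  classical
  obtain ⟨a', ha⟩ := hiso a
  obtain ⟨b', hb⟩ := hiso b
  exact SimpleGraph.gammaT_le_gammaT_add 2 fun S hS =>
    ⟨_, hS.of_sup_edge ha hb, Finset.card_insert_insert_le a' b' S⟩

/-- Adding an edge to a graph without isolated vertices can
decrease the total domination number by at most two. -/
theorem stmt2 {V : Type*} [DecidableEq V] (G : SimpleGraph V)
    (hiso : ∀ v : V, ∃ u : V, G.Adj v u)
    (a b : V) (hab : a ≠ b) (hnadj : ¬ G.Adj a b) :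
    gammaT G ≤ gammaT (G ⊔ SimpleGraph.fromEdgeSet {s(a, b)}) + 2 :=
  stmt2_general G hiso a b
end

section
/- Let G be a graph on n vertices and (A, B) a partition of its vertex set. Suppose there is an injective map f assigning to every missing edge of G that lies within A or within B an edge of G with one endpoint in A and the other in B. Then the number of edges of the complement Gᶜ is at most |A|·|B|, which is at most ⌊n²/4⌋. -/
/-!
Split the missing edges into those inside a part and those crossing the partition. The map `f`
sends the former injectively to crossing pairs that are edges of `G`, hence disjointly from the
latter, so there are at most as many missing edges as crossing pairs, i.e. `|A| * |B|`.
The bound `|A| * |B| ≤ (|A| + |B|)² / 4` is AM–GM.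
-/

namespace Sym2

variable {V : Type*}

def crossing (A B : Set V) : Set (Sym2 V) := {e | (∃ x ∈ e, x ∈ A) ∧ (∃ y ∈ e, y ∈ B)}

theorem crossing_eq_image_prod {A B : Set V} (h : Disjoint A B) :
    crossing A B = (fun p : V × V => s(p.1, p.2)) '' (A ×ˢ B) := by
  ext e
  induction e with
  | h x y =>
    simp only [crossing, Set.mem_ofPred_eq, mem_iff, Set.mem_image, Set.mem_prod, Prod.exists]
    constructor
    · rintro ⟨⟨a, rfl | rfl, ha⟩, ⟨b, rfl | rfl, hb⟩⟩
      · exact (h.ne_of_mem ha hb rfl).elim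
      · exact ⟨a, b, ⟨ha, hb⟩, rfl⟩
      · exact ⟨a, b, ⟨ha, hb⟩, eq_swap⟩
      · exact (h.ne_of_mem ha hb rfl).elim
    · rintro ⟨a, b, ⟨ha, hb⟩, hab⟩
      rcases Sym2.eq_iff.mp hab with ⟨rfl, rfl⟩ | ⟨rfl, rfl⟩
      · exact ⟨⟨a, Or.inl rfl, ha⟩, ⟨b, Or.inr rfl, hb⟩⟩
      · exact ⟨⟨a, Or.inr rfl, ha⟩, ⟨b, Or.inl rfl, hb⟩⟩

theorem ncard_crossing {A B : Set V} (h : Disjoint A B) :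
    (crossing A B).ncard = A.ncard * B.ncard := by
  have hinj : Set.InjOn (fun p : V × V => s(p.1, p.2)) (A ×ˢ B) := by
    rintro ⟨a, b⟩ ⟨ha, hb⟩ ⟨c, d⟩ ⟨hc, hd⟩ hab
    rcases Sym2.eq_iff.mp hab with ⟨rfl, rfl⟩ | ⟨rfl, rfl⟩
    · rfl
    · exact (h.ne_of_mem ha hd rfl).elim
  rw [crossing_eq_image_prod h, hinj.ncard_image, Set.ncard_prod]

theorem forall_mem_or_forall_mem_or_mem_crossing {A B : Set V} (h : A ∪ B = Set.univ)
    (e : Sym2 V) : (∀ x ∈ e, x ∈ A) ∨ (∀ x ∈ e, x ∈ B) ∨ e ∈ crossing A B := by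
  have hmem (v : V) : v ∈ A ∨ v ∈ B := by simp [← Set.mem_union, h]
  induction e with
  | h x y =>
    simp only [forall_mem_pair]
    simp only [crossing, Set.mem_ofPred_eq, mem_iff, exists_eq_or_imp, exists_eq_left]
    rcases hmem x with hx | hx <;> rcases hmem y with hy | hy <;> tauto

end Sym2

theorem Set.ncard_le_ncard_of_injOn_diff {α : Type*} {S M C : Set α} (hC : C.Finite)
    (hS : S ⊆ M ∪ C) {f : α → α} (hf : Set.MapsTo f M (C \ S)) (hinj : Set.InjOn f M) :
    S.ncard ≤ C.ncard := by
  have hM : M.Finite :=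
    Set.Finite.of_finite_image (hC.subset (hf.image_subset.trans sdiff_subset)) hinj
  have hdisj : Disjoint (f '' M) (S ∩ C) :=
    Set.disjoint_left.mpr fun _ he hSC => (hf.image_subset he).2 hSC.1
  calc S.ncard ≤ (M ∪ S ∩ C).ncard :=
        Set.ncard_le_ncard (fun e he => (hS he).imp_right fun h => ⟨he, h⟩)
          (hM.union (hC.inter_of_right S))
    _ ≤ M.ncard + (S ∩ C).ncard := Set.ncard_union_le _ _
    _ = (f '' M ∪ S ∩ C).ncard := by
        rw [Set.ncard_union_eq hdisj (hM.image f) (hC.inter_of_right S), hinj.ncard_image]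
    _ ≤ C.ncard := Set.ncard_le_ncard
        (Set.union_subset (hf.image_subset.trans sdiff_subset) inter_subset_right) hC

theorem Nat.mul_le_add_sq_div_four (a b : ℕ) : a * b ≤ (a + b) ^ 2 / 4 := by
  rw [Nat.le_div_iff_mul_le (by norm_num)]
  zify
  nlinarith [sq_nonneg ((a : ℤ) - b)]

theorem stmt5_general {V : Type*} [Fintype V] (G : SimpleGraph V)
    (A B : Set V) (hdisj : Disjoint A B) (hcover : A ∪ B = Set.univ)
    (M X : Set (Sym2 V))
    (hM : M = {e | e ∈ Gᶜ.edgeSet ∧ ((∀ x ∈ e, x ∈ A) ∨ (∀ x ∈ e, x ∈ B))})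
    (hX : X = {e | e ∈ G.edgeSet ∧ (∃ x ∈ e, x ∈ A) ∧ (∃ y ∈ e, y ∈ B)})
    (f : Sym2 V → Sym2 V) (hf : ∀ e ∈ M, f e ∈ X) (hinj : Set.InjOn f M) :
    Gᶜ.edgeSet.ncard ≤ A.ncard * B.ncard ∧
      A.ncard * B.ncard ≤ Fintype.card V ^ 2 / 4 := by
  have hcover_edges : Gᶜ.edgeSet ⊆ M ∪ Sym2.crossing A B := fun e he => by
    rw [hM]
    rcases Sym2.forall_mem_or_forall_mem_or_mem_crossing hcover e with hA | hB | hAB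
    exacts [Or.inl ⟨he, Or.inl hA⟩, Or.inl ⟨he, Or.inr hB⟩, Or.inr hAB]
  have hmaps : Set.MapsTo f M (Sym2.crossing A B \ Gᶜ.edgeSet) := fun e he => by
    have hfe := hf e he
    rw [hX] at hfe
    exact ⟨hfe.2, Set.disjoint_left.mp (G.disjoint_edgeSet.mpr disjoint_compl_right) hfe.1⟩
  have hcard : A.ncard + B.ncard = Fintype.card V := by
    rw [← Set.ncard_union_eq hdisj, hcover, Set.ncard_univ, Nat.card_eq_fintype_card]
  refine ⟨?_, hcard ▸ Nat.mul_le_add_sq_div_four _ _⟩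
  rw [← Sym2.ncard_crossing hdisj]
  exact Set.ncard_le_ncard_of_injOn_diff (Set.toFinite _) hcover_edges hmaps hinj

/-- If every missing edge within a part of a vertex partition
(A, B) can be injectively associated with a crossing edge, then the number of
missing edges is at most |A|·|B| ≤ ⌊n²/4⌋. -/
theorem stmt5 {V : Type*} [Fintype V] [DecidableEq V] (G : SimpleGraph V)
    (A B : Set V) (hdisj : Disjoint A B) (hcover : A ∪ B = Set.univ)
    (M X : Set (Sym2 V))
    (hM : M = {e | e ∈ Gᶜ.edgeSet ∧ ((∀ x ∈ e, x ∈ A) ∨ (∀ x ∈ e, x ∈ B))})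
    (hX : X = {e | e ∈ G.edgeSet ∧ (∃ x ∈ e, x ∈ A) ∧ (∃ y ∈ e, y ∈ B)})
    (f : Sym2 V → Sym2 V) (hf : ∀ e ∈ M, f e ∈ X) (hinj : Set.InjOn f M) :
    Gᶜ.edgeSet.ncard ≤ A.ncard * B.ncard ∧
      A.ncard * B.ncard ≤ Fintype.card V ^ 2 / 4 :=
  stmt5_general G A B hdisj hcover M X hM hX f hf hinj
end

section
/- Let G be a graph of diameter two and {x, y} a vertex cut of G of size two. Then {x, y} dominates G: every vertex of G − {x,y} is adjacent to x or to y. -/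
/-- G has diameter two. -/
def DiamTwo {V : Type*} (G : SimpleGraph V) : Prop :=
  (∀ u v : V, u ≠ v → G.Adj u v ∨ ∃ w : V, G.Adj u w ∧ G.Adj w v) ∧
    ∃ u v : V, u ≠ v ∧ ¬ G.Adj u v

/-- Removing the vertex set S disconnects G. -/
def RemovalDisconnects {V : Type*} (G : SimpleGraph V) (S : Set V) : Prop :=
  ∃ a b : (Sᶜ : Set V), ¬ (G.induce Sᶜ).Reachable a b

/-
If some u outside S had no neighbour in S, then every other vertex outside S, being within
distance two of u, would be joined to u either directly or through a middle vertex that is a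
neighbour of u and hence also outside S. So G − S would be connected.
-/

namespace SimpleGraph

variable {V : Type*} {G : SimpleGraph V} {S : Set V}

theorem preconnected_induce_compl_of_forall_not_adj
    (hdist : ∀ u v : V, u ≠ v → G.Adj u v ∨ ∃ w : V, G.Adj u w ∧ G.Adj w v)
    (u : (Sᶜ : Set V)) (hu : ∀ s ∈ S, ¬ G.Adj u s) : (G.induce Sᶜ).Preconnected := by
  have reach_u : ∀ v : (Sᶜ : Set V), (G.induce Sᶜ).Reachable u v := by
    intro v
    by_cases huv : u = v
    · rw [huv]
    rcases hdist u v (Subtype.coe_ne_coe.mpr huv) with hadj | ⟨w, huw, hwv⟩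
    · exact Adj.reachable (by simpa using hadj)
    · have hw : w ∉ S := fun hwS => hu w hwS huw
      have huw' : (G.induce Sᶜ).Adj u ⟨w, hw⟩ := by simpa using huw
      have hwv' : (G.induce Sᶜ).Adj ⟨w, hw⟩ v := by simpa using hwv
      exact huw'.reachable.trans hwv'.reachable
  exact fun a b => (reach_u a).symm.trans (reach_u b)

theorem exists_adj_of_removalDisconnects
    (hdist : ∀ u v : V, u ≠ v → G.Adj u v ∨ ∃ w : V, G.Adj u w ∧ G.Adj w v)
    (hcut : RemovalDisconnects G S) (u : V) (hu : u ∉ S) : ∃ s ∈ S, G.Adj s u := by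
  by_contra! h
  obtain ⟨a, b, hab⟩ := hcut
  exact hab <| preconnected_induce_compl_of_forall_not_adj hdist ⟨u, hu⟩
    (fun s hs hus => h s hs hus.symm) a b

end SimpleGraph

theorem stmt12_general {V : Type*} (G : SimpleGraph V)
    (hdiam : DiamTwo G) (x y : V)
    (hcut : RemovalDisconnects G {x, y}) :
    ∀ u : V, u ∉ ({x, y} : Set V) → G.Adj x u ∨ G.Adj y u := by
  intro u hu
  simpa using SimpleGraph.exists_adj_of_removalDisconnects hdiam.1 hcut u hu

/-- In a connected diameter-two graph, a two-vertex cut {x,y}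
dominates the graph. -/
theorem stmt12 {V : Type*} (G : SimpleGraph V) (hconn : G.Connected)
    (hdiam : DiamTwo G) (x y : V) (hxy : x ≠ y)
    (hcut : RemovalDisconnects G {x, y}) :
    ∀ u : V, u ∉ ({x, y} : Set V) → G.Adj x u ∨ G.Adj y u :=
  stmt12_general G hdiam x y hcut
end

section
/- If G is a 3-γₜ-edge-critical graph on n vertices whose complement has at least ⌊n²/4⌋ edges and which has a vertex partition (A,B) such that every missing edge within A or within B has a unique quasi-edge in [A,B] and every edge in [A,B] is the quasi-edge of some missing edge, then the graph on A formed by the missing edges within A is bipartite. -/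
/-- G is 3-γₜ-edge-critical. -/
def Critical3 {V : Type*} [DecidableEq V] (G : SimpleGraph V) : Prop :=
  gammaT G = 3 ∧
    ∀ u v : V, u ≠ v → ¬ G.Adj u v →
      gammaT (G ⊔ SimpleGraph.fromEdgeSet {s(u, v)}) = 2

/-- `uv` is a missing edge lying within A or within B. -/
def MissingWithin {V : Type*} (G : SimpleGraph V) (A B : Set V) (u v : V) : Prop :=
  u ≠ v ∧ ¬ G.Adj u v ∧ ((u ∈ A ∧ v ∈ A) ∨ (u ∈ B ∧ v ∈ B))

/-- `e` is an edge of G crossing the partition (A, B). -/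
def Crossing {V : Type*} (G : SimpleGraph V) (A B : Set V) (e : Sym2 V) : Prop :=
  e ∈ G.edgeSet ∧ (∃ x ∈ e, x ∈ A) ∧ (∃ y ∈ e, y ∈ B)

/-- `e` is a quasi-edge of the missing edge `uv`: an edge of G containing an
endpoint of `uv` whose two endpoints dominate `G + uv`. -/
def QuasiOf {V : Type*} [DecidableEq V] (G : SimpleGraph V) (u v : V)
    (e : Sym2 V) : Prop :=
  ∃ p q : V, e = s(p, q) ∧ G.Adj p q ∧ (p = u ∨ p = v ∨ q = u ∨ q = v) ∧
    ∀ w : V, w = p ∨ w = q ∨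
      (G ⊔ SimpleGraph.fromEdgeSet {s(u, v)}).Adj p w ∨
      (G ⊔ SimpleGraph.fromEdgeSet {s(u, v)}).Adj q w

/-!
For a missing edge `uv` inside `A`, let `uy` (`y ∈ B`) be its unique crossing quasi-edge. If
`ub` is a crossing edge with `b` not adjacent to `v`, then `ub` is the quasi-edge of some missing
edge within a part, and since `{u, b}` must dominate `v` once that edge is added, the edge is `uv`;
uniqueness gives `b = y`. Hence `N_B(u) ⊆ N_B(v) ∪ {y}`, and symmetrically `N_B(v) ⊆ N_B(u)`.
As `γₜ(G) > 2`, `{u, y}` does not dominate `G`, so `v` is not adjacent to `y`. Thus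
`|N_B(u)| = |N_B(v)| + 1`, so the parity of `|N_B(·)|` properly 2-colours the missing edges in `A`.
-/

open SimpleGraph

section

variable {V : Type*} {G : SimpleGraph V} {A B : Set V} {u v a c w y : V}

lemma crossing_mk (hac : G.Adj a c) (ha : a ∈ A) (hc : c ∈ B) : Crossing G A B s(a, c) :=
  ⟨hac, ⟨a, Sym2.mem_mk_left a c, ha⟩, ⟨c, Sym2.mem_mk_right a c, hc⟩⟩

lemma Crossing.exists_eq (hdisj : Disjoint A B) {e : Sym2 V} (he : Crossing G A B e) :
    ∃ a ∈ A, ∃ y ∈ B, e = s(a, y) := by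
  obtain ⟨-, ⟨a, ha, haA⟩, ⟨y, hy, hyB⟩⟩ := he
  exact ⟨a, haA, y, hyB, (Sym2.mem_and_mem_iff (hdisj.ne_of_mem haA hyB)).mp ⟨ha, hy⟩⟩

lemma MissingWithin.sym2_ne {x z : V} (hm : MissingWithin G A B x z) (hdisj : Disjoint A B)
    (hc : c ∈ B) (hw : w ∈ A) : s(c, w) ≠ s(x, z) := by
  intro h
  rcases Sym2.eq_iff.mp h with ⟨rfl, rfl⟩ | ⟨rfl, rfl⟩ <;>
    rcases hm.2.2 with ⟨h₁, h₂⟩ | ⟨h₁, h₂⟩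
  exacts [hdisj.ne_of_mem h₁ hc rfl, hdisj.ne_of_mem hw h₂ rfl,
    hdisj.ne_of_mem h₂ hc rfl, hdisj.ne_of_mem hw h₁ rfl]

variable [DecidableEq V]

lemma quasiOf_congr {u' v' : V} (h : s(u, v) = s(u', v')) {e : Sym2 V}
    (hq : QuasiOf G u v e) : QuasiOf G u' v' e := by
  obtain ⟨p, q, he, hpq, hmem, hdom⟩ := hq
  refine ⟨p, q, he, hpq, ?_, by rw [← h]; exact hdom⟩
  rcases Sym2.eq_iff.mp h with ⟨rfl, rfl⟩ | ⟨rfl, rfl⟩ <;> tauto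

lemma quasiOf_mk_iff :
    QuasiOf G u v s(a, c) ↔ G.Adj a c ∧ (a = u ∨ a = v ∨ c = u ∨ c = v) ∧
      ∀ w, w = a ∨ w = c ∨ (G ⊔ fromEdgeSet {s(u, v)}).Adj a w ∨
        (G ⊔ fromEdgeSet {s(u, v)}).Adj c w := by
  constructor
  · rintro ⟨p, q, he, hpq, hmem, hdom⟩
    rcases Sym2.eq_iff.mp he with ⟨rfl, rfl⟩ | ⟨rfl, rfl⟩
    · exact ⟨hpq, hmem, hdom⟩
    · exact ⟨hpq.symm, by tauto, fun w => by have := hdom w; tauto⟩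
  · rintro ⟨hac, hmem, hdom⟩
    exact ⟨a, c, rfl, hac, hmem, hdom⟩

lemma QuasiOf.adj (h : QuasiOf G u v s(a, c)) : G.Adj a c :=
  (quasiOf_mk_iff.mp h).1

lemma QuasiOf.mem (h : QuasiOf G u v s(a, c)) : a = u ∨ a = v ∨ c = u ∨ c = v :=
  (quasiOf_mk_iff.mp h).2.1

lemma QuasiOf.dominates (h : QuasiOf G u v s(a, c)) (w : V) :
    G.Adj a w ∨ G.Adj c w ∨ s(a, w) = s(u, v) ∨ s(c, w) = s(u, v) := by
  obtain ⟨hac, -, hdom⟩ := quasiOf_mk_iff.mp h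
  rcases hdom w with rfl | rfl | h | h
  · exact Or.inr (Or.inl hac.symm)
  · exact Or.inl hac
  all_goals simp only [sup_adj, fromEdgeSet_adj, Set.mem_singleton_iff] at h; tauto

lemma gammaT_le_two (hac : G.Adj a c) (h : ∀ w, G.Adj a w ∨ G.Adj c w) : gammaT G ≤ 2 := by
  refine sInf_le ⟨{a, c}, by rw [Finset.card_pair hac.ne]; rfl, fun w => ?_⟩
  rcases h w with h | h
  · exact ⟨a, by simp, h.symm⟩
  · exact ⟨c, by simp, h.symm⟩

lemma QuasiOf.not_adj (hγ : 2 < gammaT G) (hq : QuasiOf G u v s(u, y)) : ¬ G.Adj v y := by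
  intro hvy
  have huy := hq.adj
  refine hγ.not_ge (gammaT_le_two huy fun w => ?_)
  rcases hq.dominates w with h | h | h | h
  · exact Or.inl h
  · exact Or.inr h
  · rcases Sym2.eq_iff.mp h with ⟨-, rfl⟩ | ⟨-, rfl⟩
    · exact Or.inr hvy.symm
    · exact Or.inr huy.symm
  · rcases Sym2.eq_iff.mp h with ⟨rfl, -⟩ | ⟨-, rfl⟩
    · exact (huy.ne rfl).elim
    · exact Or.inr huy.symm

section Surjective

variable (hdisj : Disjoint A B)
  (hsurj : ∀ e : Sym2 V, Crossing G A B e → ∃ u v : V, MissingWithin G A B u v ∧ QuasiOf G u v e)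
include hdisj hsurj

lemma quasiOf_of_not_adj (ha : a ∈ A) (hc : c ∈ B) (hac : G.Adj a c) (hw : w ∈ A)
    (haw : ¬ G.Adj a w) (hcw : ¬ G.Adj c w) : QuasiOf G a w s(a, c) := by
  obtain ⟨x, z, hm, hq⟩ := hsurj _ (crossing_mk hac ha hc)
  refine quasiOf_congr ?_ hq
  rcases hq.dominates w with h | h | h | h
  · exact absurd h haw
  · exact absurd h hcw
  · exact h.symm
  · exact absurd h (hm.sym2_ne hdisj hc hw)

lemma neighborSet_inter_eq_insert (hu : u ∈ A) (hv : v ∈ A) (huv : ¬ G.Adj u v) (hy : y ∈ B)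
    (hq : QuasiOf G u v s(u, y))
    (huniq : ∀ e, Crossing G A B e → QuasiOf G u v e → e = s(u, y)) :
    G.neighborSet u ∩ B = insert y (G.neighborSet v ∩ B) := by
  ext b
  simp only [Set.mem_inter_iff, mem_neighborSet, Set.mem_insert_iff]
  constructor
  · rintro ⟨hub, hb⟩
    refine or_iff_not_imp_left.mpr fun hby => ⟨?_, hb⟩
    by_contra hvb
    have hquasi := quasiOf_of_not_adj hdisj hsurj hu hb hub hv huv fun h => hvb h.symm
    exact hby (Sym2.congr_right.mp (huniq _ (crossing_mk hub hu hb) hquasi))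
  · rintro (rfl | ⟨hvb, hb⟩)
    · exact ⟨hq.adj, hy⟩
    refine ⟨?_, hb⟩
    by_contra hub
    have hquasi := quasiOf_of_not_adj hdisj hsurj hv hb hvb hu (fun h => huv h.symm)
      fun h => hub h.symm
    rcases Sym2.eq_iff.mp (huniq _ (crossing_mk hvb hv hb) (quasiOf_congr Sym2.eq_swap hquasi))
      with ⟨rfl, -⟩ | ⟨h, -⟩
    · exact hub hvb
    · exact hdisj.ne_of_mem hv hy h

variable [Finite V] (hγ : 2 < gammaT G)
include hγ

lemma ncard_neighborSet_inter_eq_add_one (hu : u ∈ A) (hv : v ∈ A) (huv : ¬ G.Adj u v)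
    (hy : y ∈ B) (hq : QuasiOf G u v s(u, y))
    (huniq : ∀ e, Crossing G A B e → QuasiOf G u v e → e = s(u, y)) :
    (G.neighborSet u ∩ B).ncard = (G.neighborSet v ∩ B).ncard + 1 := by
  rw [neighborSet_inter_eq_insert hdisj hsurj hu hv huv hy hq huniq,
    Set.ncard_insert_of_notMem fun h => hq.not_adj hγ h.1]

lemma ncard_neighborSet_inter_eq_add_one_or
    (hquasi : ∀ u v : V, MissingWithin G A B u v →
      ∃! e : Sym2 V, Crossing G A B e ∧ QuasiOf G u v e)
    (hu : u ∈ A) (hv : v ∈ A) (hne : u ≠ v) (huv : ¬ G.Adj u v) :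
    (G.neighborSet u ∩ B).ncard = (G.neighborSet v ∩ B).ncard + 1 ∨
      (G.neighborSet v ∩ B).ncard = (G.neighborSet u ∩ B).ncard + 1 := by
  obtain ⟨e, ⟨hcr, hq⟩, huniq⟩ := hquasi u v ⟨hne, huv, Or.inl ⟨hu, hv⟩⟩
  obtain ⟨a, -, y, hy, rfl⟩ := hcr.exists_eq hdisj
  rcases hq.mem with rfl | rfl | rfl | rfl
  · exact Or.inl <| ncard_neighborSet_inter_eq_add_one hdisj hsurj hγ hu hv huv hy hq
      fun e hc hq' => huniq e ⟨hc, hq'⟩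
  · exact Or.inr <| ncard_neighborSet_inter_eq_add_one hdisj hsurj hγ hv hu
      (fun h => huv h.symm) hy (quasiOf_congr Sym2.eq_swap hq)
      fun e hc hq' => huniq e ⟨hc, quasiOf_congr Sym2.eq_swap hq'⟩
  · exact absurd rfl (hdisj.ne_of_mem hu hy)
  · exact absurd rfl (hdisj.ne_of_mem hv hy)

end Surjective

end

lemma exists_even_odd_split {V : Type*} (A : Set V) (f : V → ℕ) (R : V → V → Prop)
    (h : ∀ u v, u ∈ A → v ∈ A → R u v → f u = f v + 1 ∨ f v = f u + 1) :
    ∃ X Y : Set V, X ∪ Y = A ∧ Disjoint X Y ∧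
      ∀ u v, u ∈ A → v ∈ A → R u v → (u ∈ X ∧ v ∈ Y) ∨ (u ∈ Y ∧ v ∈ X) := by
  refine ⟨{a ∈ A | Even (f a)}, {a ∈ A | ¬ Even (f a)}, ?_, ?_, fun u v hu hv huv => ?_⟩
  · ext a
    simp only [Set.mem_union, Set.mem_ofPred_eq]
    tauto
  · exact Set.disjoint_left.mpr fun a ha ha' => ha'.2 ha.2
  · have hpar : Even (f u) ↔ ¬ Even (f v) := by
      rcases h u v hu hv huv with h | h <;> simp only [h, Nat.even_add_one, not_not]
    simp only [Set.mem_ofPred_eq]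
    tauto

theorem stmt15_general {V : Type*} [Fintype V] [DecidableEq V] (G : SimpleGraph V)
    (hcrit : Critical3 G)
    (A B : Set V) (hdisj : Disjoint A B)
    (hquasi : ∀ u v : V, MissingWithin G A B u v →
      ∃! e : Sym2 V, Crossing G A B e ∧ QuasiOf G u v e)
    (hsurj : ∀ e : Sym2 V, Crossing G A B e →
      ∃ u v : V, MissingWithin G A B u v ∧ QuasiOf G u v e) :
    ∃ X Y : Set V, X ∪ Y = A ∧ Disjoint X Y ∧
      ∀ u v : V, u ∈ A → v ∈ A → u ≠ v → ¬ G.Adj u v →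
        ((u ∈ X ∧ v ∈ Y) ∨ (u ∈ Y ∧ v ∈ X)) := by
  have hγ : 2 < gammaT G := by rw [hcrit.1]; norm_num
  obtain ⟨X, Y, hA, hXY, hsplit⟩ := exists_even_odd_split A (fun a => (G.neighborSet a ∩ B).ncard)
    (fun u v => u ≠ v ∧ ¬ G.Adj u v) fun u v hu hv ⟨hne, huv⟩ =>
      ncard_neighborSet_inter_eq_add_one_or hdisj hsurj hγ hquasi hu hv hne huv
  exact ⟨X, Y, hA, hXY, fun u v hu hv hne huv => hsplit u v hu hv ⟨hne, huv⟩⟩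

/-- If a 3-γₜ-edge-critical graph G on n vertices has at least
⌊n²/4⌋ missing edges and a vertex partition (A, B) in which every missing
edge within a part has a unique crossing quasi-edge and every crossing edge
is a quasi-edge of such a missing edge, then the missing edges within A form
a bipartite graph on A. -/
theorem stmt15 {V : Type*} [Fintype V] [DecidableEq V] (G : SimpleGraph V)
    (hcrit : Critical3 G)
    (hedges : Fintype.card V ^ 2 / 4 ≤ Gᶜ.edgeSet.ncard)
    (A B : Set V) (hdisj : Disjoint A B) (hcover : A ∪ B = Set.univ)
    (hquasi : ∀ u v : V, MissingWithin G A B u v →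
      ∃! e : Sym2 V, Crossing G A B e ∧ QuasiOf G u v e)
    (hsurj : ∀ e : Sym2 V, Crossing G A B e →
      ∃ u v : V, MissingWithin G A B u v ∧ QuasiOf G u v e) :
    ∃ X Y : Set V, X ∪ Y = A ∧ Disjoint X Y ∧
      ∀ u v : V, u ∈ A → v ∈ A → u ≠ v → ¬ G.Adj u v →
        ((u ∈ X ∧ v ∈ Y) ∨ (u ∈ Y ∧ v ∈ X)) :=
  stmt15_general G hcrit A B hdisj hquasi hsurj
end

section
/- Let G be a 3-γₜ-edge-critical graph of diameter two with a two-vertex cut {x,y}, let the weak vertices be those vertices of G − {x,y} adjacent to exactly one of x, y. Then the set of weak vertices is a clique and all weak vertices lie in a single component of G − {x,y}. -/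
/-!
Suppose two weak vertices `v`, `v'` are nonadjacent. By criticality `G + vv'` has a total
dominating pair, and since `G` has none, the pair meets `{v, v'}`. If it is `{v, v'}`, then
a common neighbour of `v` and `v'` (diameter two) lies outside `{x, y}`, because the other
vertex of the cut would be undominated; so every vertex of `G - {x, y}` is joined to `v`,
and the cut does not separate. Otherwise it is, say, `{v, w}` with `w ~ v`, and it dominates
`G - v'`. As `x ≁ y`, `w ∉ {x, y}`, so all of `G - {x, y}` except `v'` lies in the component
of `v`; hence `v'` is cut off, its only neighbour is the vertex `z` of `{x, y}` it sees, and
diameter two makes `{z, v'}` a total dominating pair of `G`.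
-/

namespace SimpleGraph

variable {V : Type*} {G : SimpleGraph V}

def DiamLeTwo (G : SimpleGraph V) : Prop :=
  ∀ u v : V, u ≠ v → G.Adj u v ∨ ∃ w : V, G.Adj u w ∧ G.Adj w v

def TotallyDominates (G : SimpleGraph V) (a b : V) : Prop :=
  ∀ v : V, G.Adj v a ∨ G.Adj v b

section TotalDomination

variable {a b u v : V}

theorem TotallyDominates.symm (h : G.TotallyDominates a b) : G.TotallyDominates b a :=
  fun v => (h v).symm

theorem TotallyDominates.ne (h : G.TotallyDominates a b) : a ≠ b := by
  rintro rfl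
  simpa using h a

theorem TotallyDominates.gammaT_le_two (h : G.TotallyDominates a b) : gammaT G ≤ 2 := by
  classical
  refine sInf_le ⟨{a, b}, by simp [Finset.card_pair h.ne], fun v => ?_⟩
  simpa using h v

theorem exists_totallyDominates_of_gammaT_eq_two (h : gammaT G = 2) :
    ∃ a b, G.TotallyDominates a b := by
  classical
  set D := {n : ℕ∞ | ∃ S : Finset V, (S.card : ℕ∞) = n ∧ ∀ v : V, ∃ u ∈ S, G.Adj v u}
  have hD : D.Nonempty := Set.nonempty_iff_ne_empty.2 fun hD => by
    have htop : gammaT G = ⊤ := (congrArg sInf hD).trans sInf_empty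
    simp [h] at htop
  obtain ⟨S, hS, hdom⟩ : sInf D ∈ D := csInf_mem hD
  obtain ⟨a, b, -, hab⟩ := Finset.card_eq_two.mp (by exact_mod_cast hS.trans h)
  refine ⟨a, b, fun v => ?_⟩
  simpa [hab] using hdom v

theorem adj_of_sup_edge_adj {z w : V} (h : (G ⊔ edge u v).Adj z w) (hu : w ≠ u) (hv : w ≠ v) :
    G.Adj z w := by
  grind

theorem TotallyDominates.of_sup_edge_left (h : (G ⊔ edge u v).TotallyDominates u b)
    (hb : b ≠ v) : G.Adj u b ∧ ∀ z, z ≠ v → G.Adj z u ∨ G.Adj z b := by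
  have hbu : b ≠ u := h.ne.symm
  have hub : G.Adj u b := adj_of_sup_edge_adj ((h u).resolve_left (SimpleGraph.irrefl _)) hbu hb
  refine ⟨hub, fun z hz => (h z).imp (fun hzu => ?_) (adj_of_sup_edge_adj · hbu hb)⟩
  exact (adj_of_sup_edge_adj hzu.symm hzu.ne hz).symm

theorem TotallyDominates.of_sup_edge (hG : ∀ a b, ¬ G.TotallyDominates a b)
    (h : (G ⊔ edge u v).TotallyDominates a b) :
    (∀ z, z ≠ u → z ≠ v → G.Adj z u ∨ G.Adj z v) ∨
      (∃ w, G.Adj u w ∧ ∀ z, z ≠ v → G.Adj z u ∨ G.Adj z w) ∨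
      (∃ w, G.Adj v w ∧ ∀ z, z ≠ u → G.Adj z v ∨ G.Adj z w) := by
  by_cases hab : (a = u ∨ a = v) ∧ (b = u ∨ b = v)
  · left
    intro z hzu hzv
    have hz (w : V) (hzw : (G ⊔ edge u v).Adj z w) :
        w = u ∨ w = v → G.Adj z u ∨ G.Adj z v := by
      rintro (rfl | rfl)
      · exact Or.inl (adj_of_sup_edge_adj hzw.symm hzu hzv).symm
      · exact Or.inr (adj_of_sup_edge_adj hzw.symm hzu hzv).symm
    exact (h z).elim (hz a · hab.1) (hz b · hab.2)
  wlog ha : a ≠ u ∧ a ≠ v generalizing a b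
  · exact this h.symm (by tauto) (by tauto)
  by_cases hbu : b = u
  · subst hbu
    exact Or.inr (Or.inl ⟨a, h.symm.of_sup_edge_left ha.2⟩)
  by_cases hbv : b = v
  · subst hbv
    rw [edge_comm] at h
    exact Or.inr (Or.inr ⟨a, h.symm.of_sup_edge_left ha.1⟩)
  exact (hG a b fun z =>
    (h z).imp (adj_of_sup_edge_adj · ha.1 ha.2) (adj_of_sup_edge_adj · hbu hbv)).elim

end TotalDomination

section Cut

variable {S : Set V}

theorem reachable_induce_of_adj {a b : V} (ha : a ∈ S) (hb : b ∈ S) (h : G.Adj a b) :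
    (G.induce S).Reachable ⟨a, ha⟩ ⟨b, hb⟩ :=
  Adj.reachable h

theorem _root_.RemovalDisconnects.exists_not_reachable (hcut : RemovalDisconnects G S)
    (a : ↥Sᶜ) : ∃ b, ¬ (G.induce Sᶜ).Reachable a b := by
  obtain ⟨p, q, hpq⟩ := hcut
  by_contra! h
  exact hpq ((h p).symm.trans (h q))

theorem _root_.RemovalDisconnects.not_reachable_of_forall_ne (hcut : RemovalDisconnects G S)
    {a c : V} (ha : a ∈ Sᶜ) (hc : c ∈ Sᶜ)
    (h : ∀ b (hb : b ∈ Sᶜ), b ≠ c → (G.induce Sᶜ).Reachable ⟨a, ha⟩ ⟨b, hb⟩) :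
    ¬ (G.induce Sᶜ).Reachable ⟨a, ha⟩ ⟨c, hc⟩ := by
  intro hac
  obtain ⟨⟨b, hb⟩, hnb⟩ := hcut.exists_not_reachable ⟨a, ha⟩
  by_cases hbc : b = c
  · subst hbc
    exact hnb hac
  · exact hnb (h b hb hbc)

theorem DiamLeTwo.exists_adj_mem (hdiam : G.DiamLeTwo) (hcut : RemovalDisconnects G S)
    {u : V} (hu : u ∈ Sᶜ) : ∃ s ∈ S, G.Adj u s := by
  obtain ⟨⟨c, hc⟩, hnc⟩ := hcut.exists_not_reachable ⟨u, hu⟩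
  have huc : u ≠ c := by
    rintro rfl
    exact hnc .rfl
  obtain ⟨m, hum, hmc⟩ :=
    (hdiam u c huc).resolve_left fun h => hnc (reachable_induce_of_adj hu hc h)
  refine ⟨m, by_contra fun hm => hnc ?_, hum⟩
  exact (reachable_induce_of_adj hu hm hum).trans (reachable_induce_of_adj hm hc hmc)

end Cut

theorem DiamLeTwo.totallyDominates_of_forall_adj_eq (hdiam : G.DiamLeTwo) {c z : V}
    (hcz : G.Adj c z) (h : ∀ u, G.Adj c u → u = z) : G.TotallyDominates z c := by
  intro u
  by_cases huz : u = z
  · exact Or.inr (huz ▸ hcz.symm)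
  by_cases huc : u = c
  · exact Or.inl (huc ▸ hcz)
  rcases hdiam c u (Ne.symm huc) with hcu | ⟨m, hcm, hmu⟩
  · exact absurd (h u hcu) huz
  · exact Or.inl (h m hcm ▸ hmu).symm

section Pair

variable {x y v v' : V}

theorem not_adj_of_removalDisconnects_pair (hdiam : G.DiamLeTwo)
    (hG : ∀ a b, ¬ G.TotallyDominates a b) (hcut : RemovalDisconnects G {x, y}) :
    ¬ G.Adj x y := by
  intro hxy
  refine hG x y fun u => ?_
  by_cases hux : u = x
  · exact Or.inr (hux ▸ hxy)
  by_cases huy : u = y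
  · exact Or.inl (huy ▸ hxy.symm)
  have hu : u ∈ ({x, y} : Set V)ᶜ := by simp [hux, huy]
  obtain ⟨s, hs | hs, hus⟩ := hdiam.exists_adj_mem hcut hu
  · exact Or.inl (hs ▸ hus)
  · exact Or.inr (hs ▸ hus)

theorem adj_of_xor_of_forall_adj_or_adj (hdiam : G.DiamLeTwo)
    (hcut : RemovalDisconnects G {x, y})
    (hv : v ∈ ({x, y} : Set V)ᶜ) (hv' : v' ∈ ({x, y} : Set V)ᶜ)
    (hw : Xor (G.Adj x v) (G.Adj y v)) (hw' : Xor (G.Adj x v') (G.Adj y v')) (hne : v ≠ v')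
    (hdom : ∀ z, z ≠ v → z ≠ v' → G.Adj z v ∨ G.Adj z v') : G.Adj v v' := by
  obtain ⟨hvx, hvy⟩ : v ≠ x ∧ v ≠ y := by simpa [not_or] using hv
  obtain ⟨hv'x, hv'y⟩ : v' ≠ x ∧ v' ≠ y := by simpa [not_or] using hv'
  have hvxy : ¬ (G.Adj x v ∧ G.Adj y v) := ((xor_iff_or_and_not_and _ _).1 hw).2
  have hv'xy : ¬ (G.Adj x v' ∧ G.Adj y v') := ((xor_iff_or_and_not_and _ _).1 hw').2
  by_contra hnadj
  obtain ⟨m, hvm, hmv'⟩ := (hdiam v v' hne).resolve_left hnadj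
  -- a common neighbour in `{x, y}` would leave the other vertex of the cut undominated
  have hm : m ∈ ({x, y} : Set V)ᶜ := by
    rintro (rfl | rfl)
    · exact (hdom y hvy.symm hv'y.symm).elim (hvxy ⟨hvm.symm, ·⟩) (hv'xy ⟨hmv', ·⟩)
    · exact (hdom x hvx.symm hv'x.symm).elim (hvxy ⟨·, hvm.symm⟩) (hv'xy ⟨·, hmv'⟩)
  have hvv' := (reachable_induce_of_adj hv hm hvm).trans (reachable_induce_of_adj hm hv' hmv')
  refine hcut.not_reachable_of_forall_ne hv hv' (fun z hz hzv' => ?_) hvv'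
  by_cases hzv : z = v
  · subst hzv
    rfl
  rcases hdom z hzv hzv' with h | h
  · exact (reachable_induce_of_adj hz hv h).symm
  · exact hvv'.trans (reachable_induce_of_adj hz hv' h).symm

theorem not_exists_adj_forall_adj_or_adj_of_xor (hdiam : G.DiamLeTwo)
    (hG : ∀ a b, ¬ G.TotallyDominates a b) (hcut : RemovalDisconnects G {x, y})
    (hv : v ∈ ({x, y} : Set V)ᶜ) (hv' : v' ∈ ({x, y} : Set V)ᶜ)
    (hw : Xor (G.Adj x v) (G.Adj y v)) (hw' : Xor (G.Adj x v') (G.Adj y v')) :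
    ¬ ∃ w, G.Adj v w ∧ ∀ z, z ≠ v' → G.Adj z v ∨ G.Adj z w := by
  rintro ⟨w, hvw, hdom⟩
  obtain ⟨hv'x, hv'y⟩ : v' ≠ x ∧ v' ≠ y := by simpa [not_or] using hv'
  have hxy := not_adj_of_removalDisconnects_pair hdiam hG hcut
  have hvxy : ¬ (G.Adj x v ∧ G.Adj y v) := ((xor_iff_or_and_not_and _ _).1 hw).2
  have hwS : w ∈ ({x, y} : Set V)ᶜ := by
    rintro (rfl | rfl)
    · exact (hdom y hv'y.symm).elim (hvxy ⟨hvw.symm, ·⟩) (hxy ·.symm)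
    · exact (hdom x hv'x.symm).elim (hvxy ⟨·, hvw.symm⟩) hxy
  have hreach (z : V) (hz : z ∈ ({x, y} : Set V)ᶜ) (hzv' : z ≠ v') :
      (G.induce _).Reachable ⟨v, hv⟩ ⟨z, hz⟩ :=
    (hdom z hzv').elim (fun hzv => (reachable_induce_of_adj hz hv hzv).symm) fun hzw =>
      (reachable_induce_of_adj hv hwS hvw).trans (reachable_induce_of_adj hz hwS hzw).symm
  have hv'_nbrs (u : V) (hv'u : G.Adj v' u) : u = x ∨ u = y := by
    by_contra hu
    refine hcut.not_reachable_of_forall_ne hv hv' hreach ?_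
    exact (hreach u hu hv'u.ne.symm).trans (reachable_induce_of_adj hu hv' hv'u.symm)
  obtain ⟨z, hz, hz_unique⟩ : ∃ z, G.Adj v' z ∧ ∀ u, G.Adj v' u → u = z := by
    rcases hw' with ⟨hx, hny⟩ | ⟨hy, hnx⟩
    · refine ⟨x, hx.symm, fun u hu => (hv'_nbrs u hu).resolve_right ?_⟩
      rintro rfl
      exact hny hu.symm
    · refine ⟨y, hy.symm, fun u hu => (hv'_nbrs u hu).resolve_left ?_⟩
      rintro rfl
      exact hnx hu.symm
  exact hG z v' (hdiam.totallyDominates_of_forall_adj_eq hz hz_unique)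

theorem adj_of_xor (hdiam : G.DiamLeTwo) (hG : ∀ a b, ¬ G.TotallyDominates a b)
    (hcrit : ∀ u v, u ≠ v → ¬ G.Adj u v → ∃ a b, (G ⊔ edge u v).TotallyDominates a b)
    (hcut : RemovalDisconnects G {x, y})
    (hv : v ∈ ({x, y} : Set V)ᶜ) (hv' : v' ∈ ({x, y} : Set V)ᶜ)
    (hw : Xor (G.Adj x v) (G.Adj y v)) (hw' : Xor (G.Adj x v') (G.Adj y v')) (hne : v ≠ v') :
    G.Adj v v' := by
  by_contra hnadj
  obtain ⟨a, b, hab⟩ := hcrit v v' hne hnadj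
  rcases hab.of_sup_edge hG with hdom | hdom | hdom
  · exact hnadj (adj_of_xor_of_forall_adj_or_adj hdiam hcut hv hv' hw hw' hne hdom)
  · exact not_exists_adj_forall_adj_or_adj_of_xor hdiam hG hcut hv hv' hw hw' hdom
  · exact not_exists_adj_forall_adj_or_adj_of_xor hdiam hG hcut hv' hv hw' hw hdom

end Pair

end SimpleGraph

theorem stmt18_general {V : Type*} [DecidableEq V] (G : SimpleGraph V)
    (hcrit : Critical3 G) (hdiam : DiamTwo G)
    (x y : V) (hcut : RemovalDisconnects G {x, y}) :
    (∀ v v' : V, v ∈ (({x, y} : Set V)ᶜ) → v' ∈ (({x, y} : Set V)ᶜ) →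
      ((G.Adj x v ∧ ¬ G.Adj y v) ∨ (G.Adj y v ∧ ¬ G.Adj x v)) →
      ((G.Adj x v' ∧ ¬ G.Adj y v') ∨ (G.Adj y v' ∧ ¬ G.Adj x v')) →
      v ≠ v' → G.Adj v v') ∧
    (∀ (v v' : V) (hv : v ∈ (({x, y} : Set V)ᶜ)) (hv' : v' ∈ (({x, y} : Set V)ᶜ)),
      ((G.Adj x v ∧ ¬ G.Adj y v) ∨ (G.Adj y v ∧ ¬ G.Adj x v)) →
      ((G.Adj x v' ∧ ¬ G.Adj y v') ∨ (G.Adj y v' ∧ ¬ G.Adj x v')) →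
      (G.induce (({x, y} : Set V)ᶜ)).Reachable ⟨v, hv⟩ ⟨v', hv'⟩) := by
  have hG (a b : V) : ¬ G.TotallyDominates a b := fun h => by
    have h32 := hcrit.1 ▸ h.gammaT_le_two
    norm_num at h32
  have hclique (v v' : V) (hv hv') (hw : Xor (G.Adj x v) (G.Adj y v))
      (hw' : Xor (G.Adj x v') (G.Adj y v')) (hne : v ≠ v') : G.Adj v v' :=
    SimpleGraph.adj_of_xor hdiam.1 hG
      (fun u v huv hnadj =>
        SimpleGraph.exists_totallyDominates_of_gammaT_eq_two (hcrit.2 u v huv hnadj))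
      hcut hv hv' hw hw' hne
  refine ⟨hclique, fun v v' hv hv' hw hw' => ?_⟩
  rcases eq_or_ne v v' with rfl | hne
  · rfl
  · exact SimpleGraph.Adj.reachable (hclique v v' hv hv' hw hw' hne)

/-- In a 3-γₜ-edge-critical diameter-two graph with a
two-vertex cut {x,y}, the weak vertices (adjacent to exactly one of x, y)
form a clique lying in a single component of G - {x,y}. -/
theorem stmt18 {V : Type*} [DecidableEq V] (G : SimpleGraph V)
    (hcrit : Critical3 G) (hconn : G.Connected) (hdiam : DiamTwo G)
    (x y : V) (hxy : x ≠ y) (hcut : RemovalDisconnects G {x, y}) :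
    (∀ v v' : V, v ∈ (({x, y} : Set V)ᶜ) → v' ∈ (({x, y} : Set V)ᶜ) →
      ((G.Adj x v ∧ ¬ G.Adj y v) ∨ (G.Adj y v ∧ ¬ G.Adj x v)) →
      ((G.Adj x v' ∧ ¬ G.Adj y v') ∨ (G.Adj y v' ∧ ¬ G.Adj x v')) →
      v ≠ v' → G.Adj v v') ∧
    (∀ (v v' : V) (hv : v ∈ (({x, y} : Set V)ᶜ)) (hv' : v' ∈ (({x, y} : Set V)ᶜ)),
      ((G.Adj x v ∧ ¬ G.Adj y v) ∨ (G.Adj y v ∧ ¬ G.Adj x v)) →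
      ((G.Adj x v' ∧ ¬ G.Adj y v') ∨ (G.Adj y v' ∧ ¬ G.Adj x v')) →
      (G.induce (({x, y} : Set V)ᶜ)).Reachable ⟨v, hv⟩ ⟨v', hv'⟩) :=
  stmt18_general G hcrit hdiam x y hcut
end
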